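/- Let m > 0 and let H : (0,∞) → ℝ be continuous with H(t) > 0 for all t > 0 and lim_{t→0⁺} ∫_t^{t₁} H(u) du = +∞ for every t₁ > 0. Fix t₁ > 0 and z₁ ∈ (0,1), and let z be the solution of the ODE z'(t) = (H(t)/2)(1 − z²) − (z/(4m))(1 − z²)² with z(t₁) = z₁, continued backward in t on the maximal interval on which z takes values in (0,1). Then this maximal interval has a left endpoint t₀ with 0 < t₀ < t₁, and lim_{t→t₀⁺} z(t) = 0. -/

import Mathlib

open Real Filter Set

/-!
In the variable `v = artanh z` the equation becomes `v' = H/2 − z(1 − z²)/(4m)`, and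
`0 ≤ z(1 − z²) ≤ 1` on `[0, 1]`. Integrating `v' ≥ H/2 − 1/(4m)` shows that `2v(t₁)` dominates
`∫_t^{t₁} H` up to a bounded term, so by the divergence of that integral the solution cannot
survive down to `t = 0`: hence `t₀ > 0`. On `(t₀, t₁]` the function `H` is bounded, so `v` is
Lipschitz and has a finite limit at `t₀`; thus `z = tanh v` tends to some `L ∈ [0, 1)`. If `L > 0`,
Picard–Lindelöf at `(t₀, L)` continues the solution to the left of `t₀` with values in `(0, 1)`,
against maximality; so `L = 0`.
-/

open Metric Function
open scoped NNReal Topology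

theorem Real.continuous_tanh : Continuous tanh := by
  rw [show tanh = fun x => sinh x / cosh x from funext tanh_eq_sinh_div_cosh]
  exact continuous_sinh.div continuous_cosh fun x => (cosh_pos x).ne'

theorem Real.hasDerivAt_artanh {x : ℝ} (hx : x ∈ Ioo (-1) 1) :
    HasDerivAt artanh (1 - x ^ 2)⁻¹ x := by
  have h₁ : 1 + x ≠ 0 := by linarith [hx.1]
  have h₂ : 1 - x ≠ 0 := by linarith [hx.2]
  have h₃ : 1 - x ^ 2 ≠ 0 := by
    rw [show 1 - x ^ 2 = (1 + x) * (1 - x) by ring]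
    exact mul_ne_zero h₁ h₂
  have hlog : HasDerivAt (fun y => 1 / 2 * (log (1 + y) - log (1 - y))) (1 - x ^ 2)⁻¹ x :=
    ((((hasDerivAt_id x).const_add 1).log h₁).sub
      (((hasDerivAt_id x).const_sub 1).log h₂) |>.const_mul (1 / 2)).congr_deriv
      (by simp only [id]; field_simp; ring)
  refine hlog.congr_of_eventuallyEq ?_
  filter_upwards [Ioo_mem_nhds hx.1 hx.2] with y hy
  rw [artanh_eq_half_log (Ioo_subset_Icc_self hy),
    log_div (by linarith [hy.1]) (by linarith [hy.2])]

theorem LipschitzOnWith.exists_tendsto_nhdsWithin {α : Type*} [PseudoMetricSpace α] {f : α → ℝ}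
    {s : Set α} {K : ℝ≥0} (hf : LipschitzOnWith K f s) (x : α) :
    ∃ L, Tendsto f (𝓝[s] x) (𝓝 L) := by
  obtain ⟨g, hg, hfg⟩ := hf.extend_real
  exact ⟨g x, (hg.continuous.tendsto x).mono_left nhdsWithin_le_nhds |>.congr'
    (eventually_nhdsWithin_of_forall fun y hy => (hfg hy).symm)⟩

section Extension

variable {E : Type*} [NormedAddCommGroup E] [NormedSpace ℝ E]

theorem hasDerivAt_of_eventually_hasDerivAt_of_ne {f g : ℝ → E} {x : ℝ}
    (hderiv : ∀ᶠ y in 𝓝[≠] x, HasDerivAt f (g y) y) (hf : ContinuousAt f x)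
    (hg : ContinuousAt g x) : HasDerivAt f (g x) x := by
  set s := {y | HasDerivAt f (g y) y}
  have hs : DifferentiableOn ℝ f s := fun y hy => hy.differentiableAt.differentiableWithinAt
  have hlim : ∀ {l}, l ≤ 𝓝[≠] x → Tendsto (deriv f) l (𝓝 (g x)) := fun hl =>
    (hg.tendsto.mono_left (hl.trans nhdsWithin_le_nhds)).congr'
      (mem_of_superset (hl hderiv) fun y hy => hy.deriv.symm)
  have hle : 𝓝[<] x ≤ 𝓝[≠] x := nhdsWithin_mono _ fun y hy => ne_of_lt hy
  have hgt : 𝓝[>] x ≤ 𝓝[≠] x := nhdsWithin_mono _ fun y hy => ne_of_gt hy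
  have hleft := hasDerivWithinAt_Iic_of_tendsto_deriv hs hf.continuousWithinAt (hle hderiv)
    (hlim hle)
  have hright := hasDerivWithinAt_Ici_of_tendsto_deriv hs hf.continuousWithinAt (hgt hderiv)
    (hlim hgt)
  simpa using hleft.union hright

theorem exists_isPicardLindelof_of_hasDerivWithinAt {f f' : ℝ → ℝ → ℝ} {t₀ x₀ δ : ℝ} {ρ : ℝ≥0}
    (hδ : 0 < δ) (hρ : 0 < ρ)
    (hf : ContinuousOn (uncurry f) (Icc (t₀ - δ) (t₀ + δ) ×ˢ closedBall x₀ ρ))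
    (hf' : ContinuousOn (uncurry f') (Icc (t₀ - δ) (t₀ + δ) ×ˢ closedBall x₀ ρ))
    (hderiv : ∀ t ∈ Icc (t₀ - δ) (t₀ + δ), ∀ x ∈ closedBall x₀ ρ,
      HasDerivWithinAt (f t) (f' t x) (closedBall x₀ ρ) x) :
    ∃ (ε : ℝ) (hε : 0 < ε), ε ≤ δ ∧ ∃ C K : ℝ≥0,
      IsPicardLindelof f (tmin := t₀ - ε) (tmax := t₀ + ε) ⟨t₀, by simp [hε.le]⟩ x₀ ρ 0 C K := by
  have hbox : IsCompact (Icc (t₀ - δ) (t₀ + δ) ×ˢ closedBall x₀ ρ) :=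
    isCompact_Icc.prod (isCompact_closedBall x₀ ρ)
  obtain ⟨C, hC0, hC⟩ := (hbox.image_of_continuousOn hf).isBounded.exists_pos_norm_le
  obtain ⟨K, hK0, hK⟩ := (hbox.image_of_continuousOn hf').isBounded.exists_pos_norm_le
  set ε := min δ (ρ / C)
  have hε : 0 < ε := lt_min hδ (by positivity)
  have hεδ : ε ≤ δ := min_le_left _ _
  have hsub : Icc (t₀ - ε) (t₀ + ε) ⊆ Icc (t₀ - δ) (t₀ + δ) :=
    Icc_subset_Icc (by linarith) (by linarith)
  refine ⟨ε, hε, hεδ, ⟨C, hC0.le⟩, ⟨K, hK0.le⟩, ⟨fun t ht => ?_, fun x hx => ?_,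
    fun t ht x hx => hC _ ⟨(t, x), ⟨hsub ht, hx⟩, rfl⟩, ?_⟩⟩
  · refine (convex_closedBall x₀ ρ).lipschitzOnWith_of_nnnorm_hasDerivWithin_le
      (hderiv t (hsub ht)) fun x hx => ?_
    exact NNReal.coe_le_coe.mp (hK _ ⟨(t, x), ⟨hsub ht, hx⟩, rfl⟩)
  · exact hf.comp (continuous_id.prodMk continuous_const).continuousOn
      fun t ht => ⟨hsub ht, hx⟩
  · simp only [NNReal.coe_zero, sub_zero, add_sub_cancel_left, sub_sub_cancel, max_self]
    calc C * ε ≤ C * (ρ / C) := by gcongr; exact min_le_right _ _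
      _ = ρ := mul_div_cancel₀ _ hC0.ne'

variable [CompleteSpace E]

theorem IsPicardLindelof.exists_extend_left_of_tendsto {f : ℝ → E → E} {z : ℝ → E}
    {a b ε : ℝ} {x₀ : E} {ρ C K : ℝ≥0} (hε : 0 < ε) (hρ : 0 < ρ) (hab : a < b)
    (hf : IsPicardLindelof f (tmin := a - ε) (tmax := a + ε) ⟨a, by simp [hε.le]⟩ x₀ ρ 0 C K)
    (hz : ∀ t ∈ Ioc a b, HasDerivAt z (f t (z t)) t) (hlim : Tendsto z (𝓝[>] a) (𝓝 x₀)) :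
    ∃ w : ℝ → E, (∀ t ∈ Ioc (a - ε) b, HasDerivAt w (f t (w t)) t) ∧
      Tendsto w (𝓝 a) (𝓝 x₀) ∧ EqOn w z (Ioi a) := by
  obtain ⟨α, hαa, hα⟩ := hf.exists_eq_forall_mem_Icc_hasDerivWithinAt₀
  have hα' : ∀ t ∈ Ioo (a - ε) (a + ε), HasDerivAt α (f t (α t)) t := fun t ht =>
    (hα t (Ioo_subset_Icc_self ht)).hasDerivAt (Icc_mem_nhds ht.1 ht.2)
  set w := fun t => if t ≤ a then α t else z t
  have hwα : EqOn w α (Iic a) := fun t ht => if_pos ht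
  have hwz : EqOn w z (Ioi a) := fun t ht => if_neg (not_le.mpr ht)
  have hwa : w a = x₀ := (hwα self_mem_Iic).trans hαa
  have hwlim : Tendsto w (𝓝 a) (𝓝 x₀) := by
    rw [← nhdsLE_sup_nhdsGT, tendsto_sup]
    refine ⟨?_, hlim.congr' (eventually_nhdsWithin_of_forall fun t ht => (hwz ht).symm)⟩
    have hαc : Tendsto α (𝓝 a) (𝓝 x₀) :=
      hαa ▸ (hα' a ⟨by linarith, by linarith⟩).continuousAt.tendsto
    exact (hαc.mono_left nhdsWithin_le_nhds).congr'
      (eventually_nhdsWithin_of_forall fun t ht => (hwα ht).symm)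
  have hwc : ContinuousAt w a := by rw [ContinuousAt, hwa]; exact hwlim
  have hderiv_ne : ∀ t ∈ Ioc (a - ε) b, t ≠ a → HasDerivAt w (f t (w t)) t := by
    intro t ht hta
    rcases hta.lt_or_gt with hta | hta
    · have hwt : w =ᶠ[𝓝 t] α := eventually_of_mem (Iic_mem_nhds hta) hwα
      rw [hwt.eq_of_nhds]
      exact (hα' t ⟨ht.1, by linarith⟩).congr_of_eventuallyEq hwt
    · have hwt : w =ᶠ[𝓝 t] z := eventually_of_mem (Ioi_mem_nhds hta) hwz
      rw [hwt.eq_of_nhds]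
      exact (hz t ⟨hta, ht.2⟩).congr_of_eventuallyEq hwt
  refine ⟨w, fun t ht => ?_, hwlim, hwz⟩
  rcases eq_or_ne t a with rfl | hta
  · refine hasDerivAt_of_eventually_hasDerivAt_of_ne (g := fun s => f s (w s)) ?_ hwc ?_
    · filter_upwards [nhdsWithin_le_nhds (Ioo_mem_nhds ht.1 hab), self_mem_nhdsWithin]
        with y hy hyt
      exact hderiv_ne y (Ioo_subset_Ioc_self hy) hyt
    · have hfc : ContinuousAt (uncurry f) (t, x₀) :=
        hf.continuousOn_uncurry.continuousAt (prod_mem_nhds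
          (Icc_mem_nhds (by linarith) (by linarith)) (closedBall_mem_nhds x₀ hρ))
      exact hfc.comp_of_eq (continuousAt_id.prodMk hwc) (congrArg (t, ·) hwa)
  · exact hderiv_ne t ht hta

end Extension

section McVittie

noncomputable def mcvittieField (m h x : ℝ) : ℝ :=
  h / 2 * (1 - x ^ 2) - x / (4 * m) * (1 - x ^ 2) ^ 2

theorem continuous_mcvittieField (m : ℝ) :
    Continuous fun p : ℝ × ℝ => mcvittieField m p.1 p.2 := by
  unfold mcvittieField
  fun_prop

theorem hasDerivAt_mcvittieField (m h x : ℝ) :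
    HasDerivAt (mcvittieField m h) (-(h * x) - (1 - x ^ 2) * (1 - 5 * x ^ 2) / (4 * m)) x := by
  have hsq : HasDerivAt (fun y : ℝ => 1 - y ^ 2) (-(2 * x)) x := by
    simpa using (hasDerivAt_pow 2 x).const_sub 1
  have hid : HasDerivAt (fun y : ℝ => y / (4 * m)) (1 / (4 * m)) x := (hasDerivAt_id x).div_const _
  exact ((hsq.const_mul (h / 2)).sub (hid.mul (hsq.pow 2))).congr_deriv (by norm_num; ring)

theorem mul_one_sub_sq_mem_Icc {x : ℝ} (hx : x ∈ Icc 0 1) : x * (1 - x ^ 2) ∈ Icc 0 1 := by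
  have h : 0 ≤ 1 - x ^ 2 := by nlinarith [hx.1, hx.2]
  exact ⟨mul_nonneg hx.1 h, by nlinarith [hx.1, hx.2]⟩

variable {m t₀ t₁ : ℝ} {H z : ℝ → ℝ}

theorem hasDerivAt_artanh_of_mcvittie {t : ℝ}
    (hz : HasDerivAt z (mcvittieField m (H t) (z t)) t) (hzt : z t ∈ Ioo (-1) 1) :
    HasDerivAt (fun s => artanh (z s)) (H t / 2 - z t * (1 - z t ^ 2) / (4 * m)) t := by
  have h : 1 - z t ^ 2 ≠ 0 := by nlinarith [hzt.1, hzt.2]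
  refine ((Real.hasDerivAt_artanh hzt).comp t hz).congr_deriv ?_
  unfold mcvittieField
  field_simp

theorem integral_le_two_mul_artanh_of_mcvittie {t : ℝ} (hm : 0 < m) (htt₁ : t ≤ t₁)
    (hH : ContinuousOn H (Icc t t₁))
    (hode : ∀ s ∈ Icc t t₁, HasDerivAt z (mcvittieField m (H s) (z s)) s)
    (hz : ∀ s ∈ Icc t t₁, z s ∈ Ico 0 1) :
    ∫ s in t..t₁, H s ≤ 2 * artanh (z t₁) + (t₁ - t) / (2 * m) := by
  have hg : ∀ s ∈ Icc t t₁, HasDerivAt (fun s => 2 * artanh (z s) + s / (2 * m))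
      (2 * (H s / 2 - z s * (1 - z s ^ 2) / (4 * m)) + 1 / (2 * m)) s := fun s hs =>
    (((hasDerivAt_artanh_of_mcvittie (hode s hs)
      ⟨by linarith [(hz s hs).1], (hz s hs).2⟩).const_mul 2).add
      ((hasDerivAt_id s).div_const (2 * m)))
  have hle := intervalIntegral.integral_le_sub_of_hasDeriv_right_of_le htt₁
    (HasDerivAt.continuousOn hg) (fun s hs => (hg s (Ioo_subset_Icc_self hs)).hasDerivWithinAt)
    hH.integrableOn_Icc fun s hs => by
      have hb := (mul_one_sub_sq_mem_Icc (Ico_subset_Icc_self (hz s (Ioo_subset_Icc_self hs)))).2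
      have h4 : z s * (1 - z s ^ 2) / (4 * m) ≤ 1 / (4 * m) := by gcongr
      have h2 : 1 / (2 * m) = 2 * (1 / (4 * m)) := by ring
      linarith
  have hnonneg := artanh_nonneg (hz t (left_mem_Icc.mpr htt₁)).1
  have : t₁ / (2 * m) - t / (2 * m) = (t₁ - t) / (2 * m) := by ring
  linarith

theorem mcvittie_left_endpoint_pos (hm : 0 < m) (hHcont : ContinuousOn H (Ioi 0))
    (hbb : Tendsto (fun t => ∫ u in t..t₁, H u) (𝓝[>] 0) atTop) (ht₁ : 0 < t₁)
    (hode : ∀ t ∈ Ioc t₀ t₁, HasDerivAt z (mcvittieField m (H t) (z t)) t)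
    (hrange : ∀ t ∈ Ioc t₀ t₁, z t ∈ Ioo 0 1) : 0 < t₀ := by
  by_contra! ht₀
  have hnear : ∀ᶠ t in 𝓝[>] (0 : ℝ), t ∈ Ioc 0 t₁ := Ioc_mem_nhdsGT ht₁
  obtain ⟨t, ht, hbig⟩ := (hnear.and
    (hbb.eventually_gt_atTop (2 * artanh (z t₁) + t₁ / (2 * m)))).exists
  have hsub : Icc t t₁ ⊆ Ioc t₀ t₁ := fun s hs => ⟨ht₀.trans_lt (ht.1.trans_le hs.1), hs.2⟩
  have hle := integral_le_two_mul_artanh_of_mcvittie hm ht.2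
    (hHcont.mono fun s hs => ht.1.trans_le hs.1) (fun s hs => hode s (hsub hs))
    fun s hs => Ioo_subset_Ico_self (hrange s (hsub hs))
  have : (t₁ - t) / (2 * m) ≤ t₁ / (2 * m) := by gcongr; linarith [ht.1]
  linarith

theorem exists_tendsto_nhdsGT_of_mcvittie (hm : 0 < m) (ht₀₁ : t₀ < t₁)
    (hH : ContinuousOn H (Icc t₀ t₁))
    (hode : ∀ t ∈ Ioc t₀ t₁, HasDerivAt z (mcvittieField m (H t) (z t)) t)
    (hrange : ∀ t ∈ Ioc t₀ t₁, z t ∈ Ico 0 1) :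
    ∃ L ∈ Ico (0 : ℝ) 1, Tendsto z (𝓝[>] t₀) (𝓝 L) := by
  obtain ⟨C, hC⟩ := isCompact_Icc.exists_bound_of_continuousOn hH
  have hzt : ∀ t ∈ Ioc t₀ t₁, z t ∈ Ioo (-1) 1 := fun t ht =>
    ⟨by linarith [(hrange t ht).1], (hrange t ht).2⟩
  have hlip : LipschitzOnWith (C / 2 + 1 / (4 * m)).toNNReal (fun t => artanh (z t))
      (Ioc t₀ t₁) := by
    refine (convex_Ioc t₀ t₁).lipschitzOnWith_of_nnnorm_hasDerivWithin_le
      (fun t ht => (hasDerivAt_artanh_of_mcvittie (hode t ht) (hzt t ht)).hasDerivWithinAt)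
      fun t ht => ?_
    have hHt := abs_le.mp ((Real.norm_eq_abs _).symm ▸ hC t (Ioc_subset_Icc_self ht))
    have hb := mul_one_sub_sq_mem_Icc (Ico_subset_Icc_self (hrange t ht))
    have h0 : 0 ≤ z t * (1 - z t ^ 2) / (4 * m) := by have := hb.1; positivity
    have h1 : z t * (1 - z t ^ 2) / (4 * m) ≤ 1 / (4 * m) := by gcongr; exact hb.2
    rw [le_toNNReal_iff_coe_le (by linarith [h0.trans h1, hHt.1]), coe_nnnorm,
      Real.norm_eq_abs, abs_le]
    constructor <;> linarith [hHt.1, hHt.2]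
  obtain ⟨A, hA⟩ := hlip.exists_tendsto_nhdsWithin t₀
  rw [nhdsWithin_Ioc_eq_nhdsGT ht₀₁] at hA
  have hlim : Tendsto z (𝓝[>] t₀) (𝓝 (tanh A)) :=
    ((Real.continuous_tanh.tendsto A).comp hA).congr' <| mem_of_superset
      (Ioc_mem_nhdsGT ht₀₁) fun t ht => tanh_artanh (hzt t ht)
  refine ⟨tanh A, ⟨ge_of_tendsto hlim ?_, tanh_lt_one A⟩, hlim⟩
  exact mem_of_superset (Ioc_mem_nhdsGT ht₀₁) fun t ht => (hrange t ht).1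

theorem exists_mcvittie_extend_left {L : ℝ} (hHcont : ContinuousOn H (Ioi 0)) (ht₀ : 0 < t₀)
    (ht₀₁ : t₀ < t₁) (hode : ∀ t ∈ Ioc t₀ t₁, HasDerivAt z (mcvittieField m (H t) (z t)) t)
    (hrange : ∀ t ∈ Ioc t₀ t₁, z t ∈ Ioo 0 1) (hlim : Tendsto z (𝓝[>] t₀) (𝓝 L))
    (hL : L ∈ Ioo 0 1) :
    ∃ (t₀' : ℝ) (w : ℝ → ℝ), 0 ≤ t₀' ∧ t₀' < t₀ ∧
      (∀ t ∈ Ioc t₀' t₁, HasDerivAt w (mcvittieField m (H t) (w t)) t) ∧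
      (∀ t ∈ Ioc t₀' t₁, w t ∈ Ioo 0 1) ∧ (∀ t ∈ Ioc t₀ t₁, w t = z t) := by
  set box := Icc (t₀ - t₀ / 2) (t₀ + t₀ / 2) ×ˢ closedBall L (1 : ℝ≥0)
  have hHbox : ContinuousOn (fun p : ℝ × ℝ => (H p.1, p.2)) box :=
    (hHcont.comp continuousOn_fst fun p hp => mem_Ioi.mpr (by linarith [hp.1.1])).prodMk
      continuousOn_snd
  have hderiv_cont : Continuous fun p : ℝ × ℝ =>
      -(p.1 * p.2) - (1 - p.2 ^ 2) * (1 - 5 * p.2 ^ 2) / (4 * m) := by fun_prop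
  obtain ⟨ε, hε, hεδ, C, K, hpl⟩ := exists_isPicardLindelof_of_hasDerivWithinAt
    (f := fun t x => mcvittieField m (H t) x)
    (f' := fun t x => -(H t * x) - (1 - x ^ 2) * (1 - 5 * x ^ 2) / (4 * m)) (half_pos ht₀) one_pos
    ((continuous_mcvittieField m).comp_continuousOn hHbox)
    (hderiv_cont.comp_continuousOn hHbox)
    fun t _ x _ => (hasDerivAt_mcvittieField m (H t) x).hasDerivWithinAt
  obtain ⟨w, hw, hwlim, hwz⟩ := hpl.exists_extend_left_of_tendsto hε one_pos ht₀₁ hode hlim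
  obtain ⟨ε', hε', hball⟩ :=
    eventually_nhds_iff_ball.mp (hwlim.eventually (Ioo_mem_nhds hL.1 hL.2))
  have hmin := min_le_left ε ε'
  refine ⟨t₀ - min ε ε', w, by linarith, by linarith [lt_min hε hε'],
    fun t ht => hw t ⟨by linarith [ht.1], ht.2⟩, fun t ht => ?_, fun t ht => hwz ht.1⟩
  rcases le_or_gt t t₀ with htt₀ | htt₀
  · refine hball t ?_
    rw [Real.ball_eq_Ioo]
    exact ⟨by linarith [ht.1, min_le_right ε ε'], by linarith⟩
  · rw [hwz htt₀]
    exact hrange t ⟨htt₀, ht.2⟩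

end McVittie

theorem irng_originates_at_singularity_general
    (m t₁ : ℝ) (hm : 0 < m) (H : ℝ → ℝ)
    (hHcont : ContinuousOn H (Set.Ioi 0))
    (hbb : ∀ T > 0, Tendsto (fun t => ∫ u in t..T, H u) (nhdsWithin 0 (Set.Ioi 0)) atTop)
    (ht₁ : 0 < t₁)
    (t₀ : ℝ) (ht₀1 : t₀ < t₁) (z : ℝ → ℝ)
    (hode : ∀ t ∈ Set.Ioc t₀ t₁,
      HasDerivAt z (H t / 2 * (1 - (z t)^2) - z t / (4*m) * (1 - (z t)^2)^2) t)
    (hrange : ∀ t ∈ Set.Ioc t₀ t₁, z t ∈ Set.Ioo (0:ℝ) 1)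
    (hmax : ¬ ∃ (t₀' : ℝ) (w : ℝ → ℝ), 0 ≤ t₀' ∧ t₀' < t₀ ∧
      (∀ t ∈ Set.Ioc t₀' t₁,
        HasDerivAt w (H t / 2 * (1 - (w t)^2) - w t / (4*m) * (1 - (w t)^2)^2) t) ∧
      (∀ t ∈ Set.Ioc t₀' t₁, w t ∈ Set.Ioo (0:ℝ) 1) ∧
      (∀ t ∈ Set.Ioc t₀ t₁, w t = z t)) :
    0 < t₀ ∧ Tendsto z (nhdsWithin t₀ (Set.Ioi t₀)) (nhds 0) := by
  have ht₀ : 0 < t₀ := mcvittie_left_endpoint_pos hm hHcont (hbb t₁ ht₁) ht₁ hode hrange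
  obtain ⟨L, ⟨hL0, hL1⟩, hlim⟩ := exists_tendsto_nhdsGT_of_mcvittie hm ht₀1
    (hHcont.mono fun t ht => ht₀.trans_le ht.1) hode fun t ht => Ioo_subset_Ico_self (hrange t ht)
  refine ⟨ht₀, ?_⟩
  rcases hL0.eq_or_lt with rfl | hL0
  · exact hlim
  · exact absurd (exists_mcvittie_extend_left hHcont ht₀ ht₀1 hode hrange hlim ⟨hL0, hL1⟩) hmax

/-- (Lemma 3, backward in time.) Let `m > 0` and let `H` be continuous and
positive on `(0,∞)` with `∫_t^{t₁} H → +∞` as `t → 0⁺` for every `t₁ > 0`. Fix `t₁ > 0`,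
`z₁ ∈ (0,1)`, and let `z` solve `z' = (H/2)(1 − z²) − (z/(4m))(1 − z²)²` with `z(t₁) = z₁`,
continued backward on the maximal interval `(t₀, t₁]` on which `z` takes values in `(0,1)`.
Then the left endpoint satisfies `0 < t₀ < t₁` and `z(t) → 0` as `t → t₀⁺`. -/
theorem irng_originates_at_singularity
    (m t₁ z₁ : ℝ) (hm : 0 < m) (H : ℝ → ℝ)
    (hHcont : ContinuousOn H (Set.Ioi 0))
    (hHpos : ∀ t > 0, 0 < H t)
    (hbb : ∀ T > 0, Tendsto (fun t => ∫ u in t..T, H u) (nhdsWithin 0 (Set.Ioi 0)) atTop)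
    (ht₁ : 0 < t₁) (hz₁ : z₁ ∈ Set.Ioo (0:ℝ) 1)
    (t₀ : ℝ) (ht₀0 : 0 ≤ t₀) (ht₀1 : t₀ < t₁) (z : ℝ → ℝ)
    (hode : ∀ t ∈ Set.Ioc t₀ t₁,
      HasDerivAt z (H t / 2 * (1 - (z t)^2) - z t / (4*m) * (1 - (z t)^2)^2) t)
    (hrange : ∀ t ∈ Set.Ioc t₀ t₁, z t ∈ Set.Ioo (0:ℝ) 1)
    (hinit : z t₁ = z₁)
    (hmax : ¬ ∃ (t₀' : ℝ) (w : ℝ → ℝ), 0 ≤ t₀' ∧ t₀' < t₀ ∧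
      (∀ t ∈ Set.Ioc t₀' t₁,
        HasDerivAt w (H t / 2 * (1 - (w t)^2) - w t / (4*m) * (1 - (w t)^2)^2) t) ∧
      (∀ t ∈ Set.Ioc t₀' t₁, w t ∈ Set.Ioo (0:ℝ) 1) ∧
      (∀ t ∈ Set.Ioc t₀ t₁, w t = z t)) :
    0 < t₀ ∧ Tendsto z (nhdsWithin t₀ (Set.Ioi t₀)) (nhds 0) :=
  irng_originates_at_singularity_general m t₁ hm H hHcont hbb ht₁ t₀ ht₀1 z hode hrange hmax
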